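/- arXiv:2406.13802 — 6 statements merged into one kernel-verified Lean document; each statement's English description precedes it below -/
import Mathlib

section
/- The sextactic points of the Fermat cubic F = x³ + y³ + z³ = 0 lie on its second Hessian H₂(F) = (x³ - y³)(y³ - z³)(x³ - z³); in particular, the scheme-theoretic intersection of F = 0 and H₂(F) = 0 in ℙ²(ℂ) consists of exactly 27 distinct points. -/
open Polynomial in
lemma cube_roots_ncard (c : ℂ) (hc : c ≠ 0) : {a : ℂ | a ^ 3 = c}.ncard = 3 := by
  have hp : (X ^ 3 - C c : ℂ[X]) ≠ 0 := by
    intro h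
    have := congrArg natDegree h
    simp [natDegree_X_pow_sub_C] at this
  have hsep : (X ^ 3 - C c : ℂ[X]).Separable :=
    separable_X_pow_sub_C c (by norm_num) hc
  have hset : {a : ℂ | a ^ 3 = c} = ((X ^ 3 - C c : ℂ[X]).roots.toFinset : Set ℂ) := by
    ext a
    simp [Polynomial.mem_roots, hp, sub_eq_zero]
  rw [hset, Set.ncard_coe_finset,
    Multiset.toFinset_card_of_nodup (Polynomial.nodup_roots hsep)]
  have := (splits_iff_card_roots.mp (IsAlgClosed.splits (X ^ 3 - C c : ℂ[X])))
  rw [this, natDegree_X_pow_sub_C]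

lemma cube_roots_finite (c : ℂ) (hc : c ≠ 0) : {a : ℂ | a ^ 3 = c}.Finite :=
  Set.finite_of_ncard_ne_zero (by rw [cube_roots_ncard c hc]; norm_num)

lemma cube_pair_finite {c d : ℂ} (hc : c ≠ 0) (hd : d ≠ 0) :
    {p : ℂ × ℂ | p.1 ^ 3 = c ∧ p.2 ^ 3 = d}.Finite := by
  have : {p : ℂ × ℂ | p.1 ^ 3 = c ∧ p.2 ^ 3 = d} =
      {a : ℂ | a ^ 3 = c} ×ˢ {b : ℂ | b ^ 3 = d} := rfl
  rw [this]
  exact (cube_roots_finite c hc).prod (cube_roots_finite d hd)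

lemma cube_pair_ncard {c d : ℂ} (hc : c ≠ 0) (hd : d ≠ 0) :
    {p : ℂ × ℂ | p.1 ^ 3 = c ∧ p.2 ^ 3 = d}.ncard = 9 := by
  classical
  have hfin1 := cube_roots_finite c hc
  have hfin2 := cube_roots_finite d hd
  have hset : {p : ℂ × ℂ | p.1 ^ 3 = c ∧ p.2 ^ 3 = d} =
      ((hfin1.toFinset ×ˢ hfin2.toFinset : Finset (ℂ × ℂ)) : Set (ℂ × ℂ)) := by
    ext p
    simp [Set.Finite.mem_toFinset, Finset.mem_product]
  rw [hset, Set.ncard_coe_finset, Finset.card_product,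
    ← Set.ncard_eq_toFinset_card _ hfin1, ← Set.ncard_eq_toFinset_card _ hfin2,
    cube_roots_ncard c hc, cube_roots_ncard d hd]

/-- The defining condition on a representative vector. -/
def FermatCond (v : Fin 3 → ℂ) : Prop :=
  v 0 ^ 3 + v 1 ^ 3 + v 2 ^ 3 = 0 ∧
    (v 0 ^ 3 - v 1 ^ 3) * (v 1 ^ 3 - v 2 ^ 3) * (v 0 ^ 3 - v 2 ^ 3) = 0

lemma fermatCond_smul {t : ℂ} (ht : t ≠ 0) (v : Fin 3 → ℂ) :
    FermatCond (t • v) ↔ FermatCond v := by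
  have h3 : t ^ 3 ≠ 0 := pow_ne_zero _ ht
  have h9 : t ^ 9 ≠ 0 := pow_ne_zero _ ht
  simp only [FermatCond, Pi.smul_apply, smul_eq_mul, mul_pow]
  constructor
  · rintro ⟨h1, h2⟩
    constructor
    · have : t ^ 3 * (v 0 ^ 3 + v 1 ^ 3 + v 2 ^ 3) = 0 := by linear_combination h1
      exact (mul_eq_zero.mp this).resolve_left h3
    · have : t ^ 9 * ((v 0 ^ 3 - v 1 ^ 3) * (v 1 ^ 3 - v 2 ^ 3) * (v 0 ^ 3 - v 2 ^ 3)) = 0 := by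
        linear_combination h2
      exact (mul_eq_zero.mp this).resolve_left h9
  · rintro ⟨h1, h2⟩
    exact ⟨by linear_combination t ^ 3 * h1, by linear_combination t ^ 9 * h2⟩

open Projectivization in
lemma fermatCond_mk {v : Fin 3 → ℂ} (hv : v ≠ 0) :
    FermatCond (Projectivization.mk ℂ v hv).rep ↔ FermatCond v := by
  obtain ⟨a, ha⟩ := exists_smul_eq_mk_rep ℂ v hv
  rw [← ha, Units.smul_def]
  exact fermatCond_smul a.ne_zero v

open Projectivization in
/-- The sextactic points of the Fermat cubic, i.e. the common zeros in `ℙ²(ℂ)` of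
`F = x³+y³+z³` and its second Hessian `H₂(F) = (x³-y³)(y³-z³)(x³-z³)`, form a set
of exactly 27 points. -/
theorem fermat_sextactic_card :
    {P : Projectivization ℂ (Fin 3 → ℂ) |
        (P.rep 0) ^ 3 + (P.rep 1) ^ 3 + (P.rep 2) ^ 3 = 0 ∧
        ((P.rep 0) ^ 3 - (P.rep 1) ^ 3) * ((P.rep 1) ^ 3 - (P.rep 2) ^ 3) *
          ((P.rep 0) ^ 3 - (P.rep 2) ^ 3) = 0}.ncard = 27 := by
  classical
  have hne : ∀ a b : ℂ, (![1, a, b] : Fin 3 → ℂ) ≠ 0 := by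
    intro a b h
    have := congrFun h 0
    simp at this
  set g : ℂ × ℂ → Projectivization ℂ (Fin 3 → ℂ) :=
    fun p => Projectivization.mk ℂ ![1, p.1, p.2] (hne p.1 p.2) with hg
  set T : Set (ℂ × ℂ) := {p : ℂ × ℂ |
    1 + p.1 ^ 3 + p.2 ^ 3 = 0 ∧
    (1 - p.1 ^ 3) * (p.1 ^ 3 - p.2 ^ 3) * (1 - p.2 ^ 3) = 0} with hT
  have hcondT : ∀ p : ℂ × ℂ, FermatCond ![1, p.1, p.2] ↔ p ∈ T := by
    intro p
    simp only [FermatCond, hT, Set.mem_setOf_eq, Matrix.cons_val_zero, Matrix.cons_val_one,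
      Matrix.head_cons, Matrix.cons_val_two, Matrix.tail_cons, one_pow]
  -- the set equals g '' T
  have himg : {P : Projectivization ℂ (Fin 3 → ℂ) |
        (P.rep 0) ^ 3 + (P.rep 1) ^ 3 + (P.rep 2) ^ 3 = 0 ∧
        ((P.rep 0) ^ 3 - (P.rep 1) ^ 3) * ((P.rep 1) ^ 3 - (P.rep 2) ^ 3) *
          ((P.rep 0) ^ 3 - (P.rep 2) ^ 3) = 0} = g '' T := by
    ext P
    constructor
    · rintro ⟨h1, h2⟩
      have hx : P.rep 0 ≠ 0 := by
        intro hx0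
        rw [hx0] at h1 h2
        have hYZ : P.rep 1 ^ 3 + P.rep 2 ^ 3 = 0 := by linear_combination h1
        have h2' : P.rep 1 ^ 3 * P.rep 2 ^ 3 * (P.rep 1 ^ 3 - P.rep 2 ^ 3) = 0 := by
          linear_combination h2
        have hY : P.rep 1 ^ 3 = 0 ∧ P.rep 2 ^ 3 = 0 := by
          rcases mul_eq_zero.mp h2' with h | h
          · rcases mul_eq_zero.mp h with h | h
            · exact ⟨h, by linear_combination hYZ - h⟩
            · exact ⟨by linear_combination hYZ - h, h⟩
          · have hy : P.rep 1 ^ 3 = 0 := by linear_combination (hYZ + h) / 2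
            exact ⟨hy, by linear_combination hYZ - hy⟩
        apply P.rep_nonzero
        funext i
        fin_cases i
        · exact hx0
        · exact pow_eq_zero_iff (n := 3) (by norm_num) |>.mp hY.1
        · exact pow_eq_zero_iff (n := 3) (by norm_num) |>.mp hY.2
      refine ⟨(P.rep 1 / P.rep 0, P.rep 2 / P.rep 0), ?_, ?_⟩
      · rw [← hcondT]
        have : (![1, P.rep 1 / P.rep 0, P.rep 2 / P.rep 0] : Fin 3 → ℂ) =
            (P.rep 0)⁻¹ • P.rep := by
          funext i
          fin_cases i <;> simp [inv_mul_cancel₀ hx, div_eq_inv_mul]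
        rw [this, fermatCond_smul (inv_ne_zero hx)]
        exact ⟨h1, h2⟩
      · show Projectivization.mk ℂ _ _ = P
        conv_rhs => rw [← P.mk_rep]
        rw [Projectivization.mk_eq_mk_iff]
        refine ⟨Units.mk0 (P.rep 0)⁻¹ (inv_ne_zero hx), ?_⟩
        funext i
        fin_cases i <;>
          simp [Units.smul_def, inv_mul_cancel₀ hx, div_eq_inv_mul]
    · rintro ⟨p, hp, rfl⟩
      have : FermatCond (g p).rep := by
        rw [hg, fermatCond_mk, hcondT]
        exact hp
      exact this
  rw [himg]
  have hginj : Function.Injective g := by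
    intro p q hpq
    rw [hg, Projectivization.mk_eq_mk_iff] at hpq
    obtain ⟨a, ha⟩ := hpq
    have h0 := congrFun ha 0
    have h1 := congrFun ha 1
    have h2 := congrFun ha 2
    simp [Units.smul_def] at h0 h1 h2
    rw [h0] at h1 h2
    simp at h1 h2
    exact Prod.ext h1.symm h2.symm
  rw [Set.ncard_image_of_injective _ hginj]
  -- decompose T into three disjoint pieces
  set T1 : Set (ℂ × ℂ) := {p : ℂ × ℂ | p.1 ^ 3 = 1 ∧ p.2 ^ 3 = -2} with hT1
  set T2 : Set (ℂ × ℂ) := {p : ℂ × ℂ | p.1 ^ 3 = -(1/2) ∧ p.2 ^ 3 = -(1/2)} with hT2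
  set T3 : Set (ℂ × ℂ) := {p : ℂ × ℂ | p.1 ^ 3 = -2 ∧ p.2 ^ 3 = 1} with hT3
  have hunion : T = T1 ∪ T2 ∪ T3 := by
    ext p
    simp only [hT, hT1, hT2, hT3, Set.mem_setOf_eq, Set.mem_union]
    constructor
    · rintro ⟨h1, h2⟩
      rcases mul_eq_zero.mp h2 with h | h
      · rcases mul_eq_zero.mp h with h | h
        · left; left
          have ha : p.1 ^ 3 = 1 := by linear_combination -h
          exact ⟨ha, by linear_combination h1 - ha⟩
        · left; right
          exact ⟨by linear_combination (h1 + h) / 2, by linear_combination (h1 - h) / 2⟩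
      · right
        have hb : p.2 ^ 3 = 1 := by linear_combination -h
        exact ⟨by linear_combination h1 + h, hb⟩
    · rintro ((⟨ha, hb⟩ | ⟨ha, hb⟩) | ⟨ha, hb⟩) <;>
        exact ⟨by rw [ha, hb]; ring, by rw [ha, hb]; ring⟩
  have hf1 : T1.Finite := cube_pair_finite one_ne_zero (by norm_num)
  have hf2 : T2.Finite := cube_pair_finite (by norm_num) (by norm_num)
  have hf3 : T3.Finite := cube_pair_finite (by norm_num) one_ne_zero
  have hd12 : Disjoint T1 T2 := by
    rw [Set.disjoint_left]
    rintro p ⟨ha, _⟩ ⟨ha', _⟩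
    rw [ha] at ha'
    norm_num at ha'
  have hd123 : Disjoint (T1 ∪ T2) T3 := by
    rw [Set.disjoint_left]
    rintro p (⟨_, hb⟩ | ⟨_, hb⟩) ⟨_, hb'⟩ <;> rw [hb'] at hb <;> norm_num at hb
  rw [hunion, Set.ncard_union_eq hd123 ((hf1.union hf2)) hf3,
    Set.ncard_union_eq hd12 hf1 hf2,
    cube_pair_ncard one_ne_zero (by norm_num : (-2 : ℂ) ≠ 0),
    cube_pair_ncard (by norm_num : (-(1/2) : ℂ) ≠ 0) (by norm_num : (-(1/2) : ℂ) ≠ 0),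
    cube_pair_ncard (by norm_num : (-2 : ℂ) ≠ 0) one_ne_zero]
end

section
/- If P = [a : b : c] is a flex of the Fermat cubic (a³+b³+c³ = 0 and abc = 0), then the tangent line a²x + b²y + c²z = 0 meets the Fermat cubic only at the point P. -/
lemma fermat_aux (a b x y z : ℂ) (hP : ¬(a = 0 ∧ b = 0))
    (hF : a ^ 3 + b ^ 3 = 0) (hxyz : ¬(x = 0 ∧ y = 0 ∧ z = 0))
    (hC : x ^ 3 + y ^ 3 + z ^ 3 = 0) (hT : a ^ 2 * x + b ^ 2 * y = 0) :
    ∃ lam : ℂ, lam ≠ 0 ∧ x = lam * a ∧ y = lam * b ∧ z = 0 := by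
  have ha : a ≠ 0 := by
    rintro rfl
    have hb3 : b ^ 3 = 0 := by linear_combination hF
    exact hP ⟨rfl, pow_eq_zero_iff (by norm_num) |>.mp hb3⟩
  have hb : b ≠ 0 := by
    rintro rfl
    have ha3 : a ^ 3 = 0 := by linear_combination hF
    exact hP ⟨pow_eq_zero_iff (by norm_num) |>.mp ha3, rfl⟩
  have hx : x = -(b ^ 2 / a ^ 2) * y := by
    field_simp
    linear_combination hT
  have ha6 : a ^ 6 = b ^ 6 := by linear_combination (a ^ 3 - b ^ 3) * hF
  have hxy3 : x ^ 3 = - y ^ 3 := by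
    rw [hx]; field_simp
    linear_combination y ^ 3 * ha6
  have hz3 : z ^ 3 = 0 := by linear_combination hC - hxy3
  have hz : z = 0 := pow_eq_zero_iff (by norm_num) |>.mp hz3
  have hy : y ≠ 0 := by
    rintro rfl
    exact hxyz ⟨by simpa using hx, rfl, hz⟩
  refine ⟨y / b, div_ne_zero hy hb, ?_, by field_simp, hz⟩
  rw [hx]; field_simp
  linear_combination -hF

/-- If `P = [a:b:c]` is a flex of the Fermat cubic (`a³+b³+c³ = 0`, `abc = 0`), then
the tangent line `a²x + b²y + c²z = 0` meets the Fermat cubic only at `P`. -/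
theorem fermat_flex_tangent_meets_once (a b c : ℂ) (hP : (a, b, c) ≠ (0, 0, 0))
    (hF : a ^ 3 + b ^ 3 + c ^ 3 = 0) (hflex : a * b * c = 0) :
    ∀ x y z : ℂ, (x, y, z) ≠ (0, 0, 0) → x ^ 3 + y ^ 3 + z ^ 3 = 0 →
      a ^ 2 * x + b ^ 2 * y + c ^ 2 * z = 0 →
      ∃ lam : ℂ, lam ≠ 0 ∧ (x, y, z) = lam • (a, b, c) := by
  intro x y z hxyz hC hT
  simp only [ne_eq, Prod.mk.injEq, not_and] at hP hxyz
  have hP' : ¬(a = 0 ∧ b = 0 ∧ c = 0) := by tauto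
  have hxyz' : ¬(x = 0 ∧ y = 0 ∧ z = 0) := by tauto
  rcases mul_eq_zero.mp hflex with h | hc
  · rcases mul_eq_zero.mp h with ha | hb
    · subst ha
      obtain ⟨lam, hl, h1, h2, h3⟩ := fermat_aux b c y z x
        (by tauto) (by linear_combination hF) (by tauto)
        (by linear_combination hC) (by linear_combination hT)
      exact ⟨lam, hl, by simp [Prod.smul_def, h1, h2, h3]⟩
    · subst hb
      obtain ⟨lam, hl, h1, h2, h3⟩ := fermat_aux a c x z y
        (by tauto) (by linear_combination hF) (by tauto)
        (by linear_combination hC) (by linear_combination hT)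
      exact ⟨lam, hl, by simp [Prod.smul_def, h1, h2, h3]⟩
  · subst hc
    obtain ⟨lam, hl, h1, h2, h3⟩ := fermat_aux a b x y z
      (by tauto) (by linear_combination hF) (by tauto)
      (by linear_combination hC) (by linear_combination hT)
    exact ⟨lam, hl, by simp [Prod.smul_def, h1, h2, h3]⟩
end

section
/- If P = [a : b : c] lies on the Fermat cubic and is not a flex (i.e., a³+b³+c³ = 0 and abc ≠ 0), then the tangent line a²x + b²y + c²z = 0 meets the Fermat cubic in exactly one point other than P. -/
open Projectivization in
/-- If `P = [a:b:c]` lies on the Fermat cubic and is not a flex (`abc ≠ 0`), then the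
tangent line `a²x + b²y + c²z = 0` meets the cubic in exactly one point other than
`P`, i.e. the intersection of the tangent line with the cubic in `ℙ²(ℂ)` has exactly
two points. -/
theorem fermat_tangent_residual (a b c : ℂ) (hP : (a, b, c) ≠ (0, 0, 0))
    (hF : a ^ 3 + b ^ 3 + c ^ 3 = 0) (hflex : a * b * c ≠ 0) :
    {Q : Projectivization ℂ (Fin 3 → ℂ) |
        (Q.rep 0) ^ 3 + (Q.rep 1) ^ 3 + (Q.rep 2) ^ 3 = 0 ∧
        a ^ 2 * Q.rep 0 + b ^ 2 * Q.rep 1 + c ^ 2 * Q.rep 2 = 0}.ncard = 2 := by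
  have ha : a ≠ 0 := fun h => hflex (by simp [h])
  have hb : b ≠ 0 := fun h => hflex (by simp [h])
  have hc : c ≠ 0 := fun h => hflex (by simp [h])
  set v₁ : Fin 3 → ℂ := ![a, b, c] with hv₁def
  set v₂ : Fin 3 → ℂ := ![a * (b^3 - c^3), b * (c^3 - a^3), c * (a^3 - b^3)] with hv₂def
  have hv₁ : v₁ ≠ 0 := by
    intro h
    exact ha (by simpa [hv₁def] using congrFun h 0)
  have hv₂ : v₂ ≠ 0 := by
    intro h
    have h0 : a * (b^3 - c^3) = 0 := by simpa [hv₂def] using congrFun h 0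
    have h1 : b * (c^3 - a^3) = 0 := by simpa [hv₂def] using congrFun h 1
    have e0 : b^3 - c^3 = 0 := by
      rcases mul_eq_zero.mp h0 with h' | h'
      · exact absurd h' ha
      · exact h'
    have e1 : c^3 - a^3 = 0 := by
      rcases mul_eq_zero.mp h1 with h' | h'
      · exact absurd h' hb
      · exact h'
    have h3 : a^3 = 0 := by linear_combination (1/3 : ℂ) * hF - (1/3 : ℂ) * e0 - (2/3 : ℂ) * e1
    exact ha (pow_eq_zero_iff (n := 3) (by norm_num) |>.mp h3)
  have hrep_scal : ∀ (v : Fin 3 → ℂ) (hv : v ≠ 0), ∃ u : ℂˣ,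
      ∀ i, (Projectivization.mk ℂ v hv).rep i = (u : ℂ) * v i := by
    intro v hv
    obtain ⟨u, hu⟩ := (Projectivization.mk_eq_mk_iff ℂ _ _
      (Projectivization.rep_nonzero _) hv).mp (Projectivization.mk_rep _)
    exact ⟨u, fun i => by rw [← hu]; simp [Units.smul_def]⟩
  have hne : Projectivization.mk ℂ v₁ hv₁ ≠ Projectivization.mk ℂ v₂ hv₂ := by
    intro h
    rw [Projectivization.mk_eq_mk_iff'] at h
    obtain ⟨t, ht⟩ := h
    have h0 : t * (a * (b^3 - c^3)) = a := by simpa [hv₁def, hv₂def] using congrFun ht 0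
    have h1 : t * (b * (c^3 - a^3)) = b := by simpa [hv₁def, hv₂def] using congrFun ht 1
    have ht0 : t ≠ 0 := by
      intro h'
      exact ha (by simpa [h'] using h0.symm)
    have h3 : t * a * b * (-3 * c^3) = 0 := by
      linear_combination b * h0 - a * h1 - t * a * b * hF
    have h4 : (-3 : ℂ) * c^3 = 0 := by
      apply mul_left_cancel₀ (mul_ne_zero (mul_ne_zero ht0 ha) hb)
      linear_combination h3
    have hc3 : c ^ 3 = 0 := by linear_combination (-1/3 : ℂ) * h4
    exact hc (pow_eq_zero_iff (n := 3) (by norm_num) |>.mp hc3)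
  have hkey : {Q : Projectivization ℂ (Fin 3 → ℂ) |
        (Q.rep 0) ^ 3 + (Q.rep 1) ^ 3 + (Q.rep 2) ^ 3 = 0 ∧
        a ^ 2 * Q.rep 0 + b ^ 2 * Q.rep 1 + c ^ 2 * Q.rep 2 = 0} =
      {Projectivization.mk ℂ v₁ hv₁, Projectivization.mk ℂ v₂ hv₂} := by
    ext Q
    simp only [Set.mem_setOf_eq, Set.mem_insert_iff, Set.mem_singleton_iff]
    constructor
    · rintro ⟨h1, h2⟩
      set x := Q.rep 0 with hx
      set y := Q.rep 1 with hy
      set z := Q.rep 2 with hz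
      have hxyz : ¬(x = 0 ∧ y = 0 ∧ z = 0) := by
        rintro ⟨hx0, hy0, hz0⟩
        apply Q.rep_nonzero
        funext i
        fin_cases i <;> assumption
      have hfac : (b * x - a * y)^2 * (b * (a^3 - c^3) * x + a * (b^3 - c^3) * y) = 0 := by
        linear_combination c^6 * h1 +
          (-( (a^2*x + b^2*y + c^2*z)^2 - 3*(a^2*x + b^2*y + c^2*z)*(c^2*z) + 3*(c^4*z^2))) * h2 +
          (a^3*x^3 + a^2*b*x*y^2 + a*b^2*x^2*y + b^3*y^3 - c^3*x^3 - c^3*y^3) * hF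
      rcases mul_eq_zero.mp hfac with h | h
      · left
        have hba : b * x - a * y = 0 := by
          exact pow_eq_zero_iff (n := 2) (by norm_num) |>.mp h
        have hxne : x ≠ 0 := by
          intro hx0
          apply hxyz
          have hy0 : y = 0 := by
            have : a * y = 0 := by linear_combination -hba + b * hx0
            rcases mul_eq_zero.mp this with h' | h'
            · exact absurd h' ha
            · exact h'
          have hz0 : z = 0 := by
            have : c^2 * z = 0 := by linear_combination h2 - a^2 * hx0 - b^2 * hy0
            rcases mul_eq_zero.mp this with h' | h'
            · exact absurd h' (pow_ne_zero 2 hc)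
            · exact h'
          exact ⟨hx0, hy0, hz0⟩
        have haz : c^2 * (a * z - c * x) = 0 := by
          linear_combination a * h2 - x * hF + b^2 * hba
        have haz' : a * z = c * x := by
          rcases mul_eq_zero.mp haz with h' | h'
          · exact absurd h' (pow_ne_zero 2 hc)
          · linear_combination h'
        rw [← Projectivization.mk_rep Q, Projectivization.mk_eq_mk_iff']
        refine ⟨x / a, ?_⟩
        funext i
        fin_cases i
        · show x / a * (v₁ 0) = Q.rep 0
          simp only [hv₁def, Matrix.cons_val_zero, ← hx]
          field_simp
        · show x / a * (v₁ 1) = Q.rep 1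
          simp only [hv₁def, Matrix.cons_val_one, Matrix.head_cons, Matrix.cons_val_zero, ← hy]
          field_simp
          linear_combination hba
        · show x / a * (v₁ 2) = Q.rep 2
          simp only [hv₁def, Matrix.cons_val_two, Matrix.tail_cons, Matrix.head_cons, ← hz]
          field_simp
          linear_combination -haz'
      · right
        rw [← Projectivization.mk_rep Q, Projectivization.mk_eq_mk_iff']
        rcases eq_or_ne (b^3) (c^3) with hbc | hbc
        · -- b³ = c³; then x = 0
          have hac : a^3 - c^3 ≠ 0 := by
            intro h'
            apply hc
            have : c^3 = 0 := by linear_combination (1/3 : ℂ) * hF - (1/3:ℂ) * h' - (1/3:ℂ) * hbc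
            exact (pow_eq_zero_iff (n := 3) (by norm_num)).mp this
          have hx0 : x = 0 := by
            have : b * (a^3 - c^3) * x = 0 := by
              linear_combination h - a * y * hbc
            rcases mul_eq_zero.mp this with h' | h'
            · exact absurd h' (mul_ne_zero hb hac)
            · exact h'
          have hca : c^3 - a^3 ≠ 0 := by
            intro h'
            exact hac (by linear_combination -h')
          refine ⟨y / (b * (c^3 - a^3)), ?_⟩
          funext i
          fin_cases i
          · show y / (b * (c^3 - a^3)) * (v₂ 0) = Q.rep 0
            simp only [hv₂def, Matrix.cons_val_zero, ← hx]
            rw [hx0]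
            field_simp
            linear_combination (y * a) * hbc
          · show y / (b * (c^3 - a^3)) * (v₂ 1) = Q.rep 1
            simp only [hv₂def, Matrix.cons_val_one, Matrix.head_cons, Matrix.cons_val_zero, ← hy]
            field_simp
          · show y / (b * (c^3 - a^3)) * (v₂ 2) = Q.rep 2
            simp only [hv₂def, Matrix.cons_val_two, Matrix.tail_cons, Matrix.head_cons, ← hz]
            have key : c^2 * (y * (c * (a^3 - b^3)) - z * (b * (c^3 - a^3))) = 0 := by
              linear_combination (-(b * (c^3 - a^3))) * h2 +
                (a^2 * b * (c^3 - a^3)) * hx0 + (-(a^3 * y)) * hbc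
            have key' : y * (c * (a^3 - b^3)) = z * (b * (c^3 - a^3)) := by
              rcases mul_eq_zero.mp key with h' | h'
              · exact absurd h' (pow_ne_zero 2 hc)
              · linear_combination h'
            field_simp
            linear_combination key'
        · -- b³ ≠ c³
          have habc : a * (b^3 - c^3) ≠ 0 := mul_ne_zero ha (sub_ne_zero.mpr hbc)
          refine ⟨x / (a * (b^3 - c^3)), ?_⟩
          funext i
          fin_cases i
          · show x / (a * (b^3 - c^3)) * (v₂ 0) = Q.rep 0
            simp only [hv₂def, Matrix.cons_val_zero, ← hx]
            field_simp
          · show x / (a * (b^3 - c^3)) * (v₂ 1) = Q.rep 1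
            simp only [hv₂def, Matrix.cons_val_one, Matrix.head_cons, Matrix.cons_val_zero, ← hy]
            field_simp
            linear_combination -h
          · show x / (a * (b^3 - c^3)) * (v₂ 2) = Q.rep 2
            simp only [hv₂def, Matrix.cons_val_two, Matrix.tail_cons, Matrix.head_cons, ← hz]
            have key : c^2 * (x * (c * (a^3 - b^3)) - z * (a * (b^3 - c^3))) = 0 := by
              linear_combination (-(a * (b^3 - c^3))) * h2 + b^2 * h
            have key' : x * (c * (a^3 - b^3)) = z * (a * (b^3 - c^3)) := by
              rcases mul_eq_zero.mp key with h' | h'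
              · exact absurd h' (pow_ne_zero 2 hc)
              · linear_combination h'
            field_simp
            linear_combination key'
    · rintro (rfl | rfl)
      · obtain ⟨u, hu⟩ := hrep_scal v₁ hv₁
        rw [hu 0, hu 1, hu 2]
        simp only [hv₁def, Matrix.cons_val_zero, Matrix.cons_val_one, Matrix.head_cons, Matrix.cons_val_two, Matrix.tail_cons]
        constructor
        · linear_combination (u : ℂ)^3 * hF
        · linear_combination (u : ℂ) * hF
      · obtain ⟨u, hu⟩ := hrep_scal v₂ hv₂
        rw [hu 0, hu 1, hu 2]
        simp only [hv₂def, Matrix.cons_val_zero, Matrix.cons_val_one, Matrix.head_cons, Matrix.cons_val_two, Matrix.tail_cons]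
        constructor
        · linear_combination ((u : ℂ)^3 * (a^3 - b^3) * (b^3 - c^3) * (c^3 - a^3)) * hF
        · ring
  rw [hkey, Set.ncard_pair hne]
end

section
/- Let f, g ∈ K[x,y] with f(0,0) = g(0,0) = 0, where K is a field. Suppose the coefficient of x in f is nonzero, and g = b·y^k + (terms of degree > k) with b ≠ 0. Then the intersection multiplicity of f and g at the origin, defined as dim_K of the localization K[x,y]_(x,y) modulo the ideal (f,g), is at most k. -/
set_option maxHeartbeats 2000000
set_option synthInstance.maxHeartbeats 400000

open MvPolynomial

private lemma im_degsum (d : Fin 2 →₀ ℕ) : (d.sum fun _ n => n) = d 0 + d 1 := by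
  rw [Finsupp.sum_fintype _ _ (fun _ => rfl)]
  exact Fin.sum_univ_two _

private lemma im_monomial_mem_pow {K : Type*} [Field K] (d : Fin 2 →₀ ℕ) (c : K) :
    (monomial d c : MvPolynomial (Fin 2) K) ∈
      (Ideal.span {X 0, X 1} : Ideal (MvPolynomial (Fin 2) K)) ^ (d 0 + d 1) := by
  have hprod : (d.prod fun n e => (X n : MvPolynomial (Fin 2) K) ^ e)
      = X 0 ^ d 0 * X 1 ^ d 1 := by
    rw [Finsupp.prod_fintype _ _ (fun i => pow_zero _)]
    exact Fin.prod_univ_two _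
  have hm : (monomial d c : MvPolynomial (Fin 2) K) = C c * X 0 ^ d 0 * X 1 ^ d 1 := by
    rw [monomial_eq, hprod, mul_assoc]
  rw [hm, pow_add]
  exact Ideal.mul_mem_mul
    (Ideal.mul_mem_left _ _ (Ideal.pow_mem_pow (Ideal.subset_span (by simp)) _))
    (Ideal.pow_mem_pow (Ideal.subset_span (by simp)) _)

private lemma im_mem_pow_of {K : Type*} [Field K] {p : MvPolynomial (Fin 2) K} {n : ℕ}
    (h : ∀ d, coeff d p ≠ 0 → n ≤ d 0 + d 1) :
    p ∈ (Ideal.span {X 0, X 1} : Ideal (MvPolynomial (Fin 2) K)) ^ n := by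
  rw [p.as_sum]
  refine Ideal.sum_mem _ fun d hd => ?_
  exact Ideal.pow_le_pow_right (h d (mem_support_iff.mp hd)) (im_monomial_mem_pow d _)

private lemma im_mem_Y_sup_sq {K : Type*} [Field K] {p : MvPolynomial (Fin 2) K}
    (h0 : coeff 0 p = 0) (h1 : coeff (Finsupp.single 0 1) p = 0) :
    p ∈ (Ideal.span {X 1} : Ideal (MvPolynomial (Fin 2) K))
      ⊔ (Ideal.span {X 0, X 1} : Ideal (MvPolynomial (Fin 2) K)) ^ 2 := by
  rw [p.as_sum]
  refine Ideal.sum_mem _ fun d hd => ?_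
  have hc := mem_support_iff.mp hd
  by_cases hy : d 1 = 0
  · have hd0 : d = Finsupp.single 0 (d 0) := by
      ext i
      fin_cases i
      · simp
      · simp [hy, Finsupp.single_apply]
    have hne0 : d 0 ≠ 0 := by
      intro h
      apply hc
      have : d = 0 := by rw [hd0, h, Finsupp.single_zero]
      rw [this]; exact h0
    have hne1 : d 0 ≠ 1 := by
      intro h
      apply hc
      have : d = Finsupp.single 0 1 := by rw [hd0, h]
      rw [this]; exact h1
    have h2 : 2 ≤ d 0 + d 1 := by omega
    exact Ideal.mem_sup_right (Ideal.pow_le_pow_right h2 (im_monomial_mem_pow d _))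
  · refine Ideal.mem_sup_left (Ideal.mem_span_singleton.mpr ?_)
    have key : Finsupp.single 1 1 + (d - Finsupp.single 1 1) = d :=
      add_tsub_cancel_of_le (Finsupp.single_le_iff.mpr (Nat.one_le_iff_ne_zero.mpr hy))
    refine ⟨monomial (d - Finsupp.single 1 1) (coeff d p), ?_⟩
    have hX : (X 1 : MvPolynomial (Fin 2) K) = monomial (Finsupp.single 1 1) 1 := rfl
    rw [hX, monomial_mul, one_mul, key]

open MvPolynomial in
/-- Lemma on intersection multiplicities: if `f, g ∈ K[x,y]` vanish at the origin,
the linear part of `f` has nonzero `x`-coefficient, and the lowest-degree part of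
`g` is `b·y^k` with `b ≠ 0`, then the intersection multiplicity of `f` and `g` at
the origin, `dim_K K[x,y]_(x,y) / (f,g)`, is at most `k`. -/
theorem intersection_multiplicity_le
    (K : Type*) [Field K] (f g : MvPolynomial (Fin 2) K) (k : ℕ)
    (hf0 : constantCoeff f = 0) (hg0 : constantCoeff g = 0)
    (hfx : coeff (Finsupp.single 0 1) f ≠ 0)
    (hgk : coeff (Finsupp.single 1 k) g ≠ 0)
    (hglow : ∀ d : Fin 2 →₀ ℕ, (d.sum fun _ n => n) ≤ k →
      d ≠ Finsupp.single 1 k → coeff d g = 0) :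
    -- the localization of `K[x,y]` at the multiplicative set of polynomials with
    -- nonzero constant term, i.e. `K[x,y]_(x,y)`
    Module.finrank K
      (Localization ((nonZeroDivisors K).comap
          (constantCoeff : MvPolynomial (Fin 2) K →+* K)) ⧸
        Ideal.map (algebraMap (MvPolynomial (Fin 2) K)
          (Localization ((nonZeroDivisors K).comap
            (constantCoeff : MvPolynomial (Fin 2) K →+* K))))
          (Ideal.span {f, g})) ≤ k := by
  classical
  -- `k = 0` is impossible
  rcases Nat.eq_zero_or_pos k with rfl | hkpos
  · exfalso
    apply hgk
    rw [Finsupp.single_zero, ← constantCoeff_eq]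
    exact hg0
  set S : Submonoid (MvPolynomial (Fin 2) K) :=
    (nonZeroDivisors K).comap (constantCoeff : MvPolynomial (Fin 2) K →+* K) with hSdef
  set J : Ideal (Localization S) :=
    Ideal.map (algebraMap (MvPolynomial (Fin 2) K) (Localization S)) (Ideal.span {f, g})
    with hJdef
  letI : CommRing (Localization S ⧸ J) := Ideal.Quotient.commRing J
  set π : Localization S →+* (Localization S ⧸ J) := Ideal.Quotient.mk J with hπdef
  set φ : MvPolynomial (Fin 2) K →+* (Localization S ⧸ J) :=
    π.comp (algebraMap (MvPolynomial (Fin 2) K) (Localization S)) with hφdef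
  have hmemS : ∀ p : MvPolynomial (Fin 2) K, constantCoeff p ≠ 0 → p ∈ S := fun p hp => by
    simpa [hSdef, mem_nonZeroDivisors_iff_ne_zero] using hp
  have hS0 : ∀ p ∈ S, constantCoeff p ≠ 0 := fun p hp => by
    simpa [hSdef, mem_nonZeroDivisors_iff_ne_zero] using hp
  have hSu : ∀ y : S, IsUnit (constantCoeff (y : MvPolynomial (Fin 2) K)) :=
    fun y => isUnit_iff_ne_zero.mpr (hS0 y y.2)
  set ev0 : Localization S →+* K := IsLocalization.lift (S := Localization S) hSu with hev0
  have hev0_alg : ∀ p : MvPolynomial (Fin 2) K,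
      ev0 (algebraMap (MvPolynomial (Fin 2) K) (Localization S) p) = constantCoeff p :=
    fun p => IsLocalization.lift_eq hSu p
  -- units of the localization
  have hunit : ∀ u : Localization S, ev0 u ≠ 0 → IsUnit u := by
    intro u
    refine Localization.induction_on u ?_
    rintro ⟨p, s⟩ hu
    have hp : constantCoeff p ≠ 0 := by
      intro h
      apply hu
      rw [Localization.mk_eq_mk'_apply, hev0]
      rw [IsLocalization.lift_mk'_spec]
      rw [h, mul_zero]
    refine IsUnit.of_mul_eq_one (Localization.mk (s : MvPolynomial (Fin 2) K)
      ⟨p, hmemS p hp⟩) ?_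
    rw [Localization.mk_mul, mul_comm p]
    exact Localization.mk_self (s * ⟨p, hmemS p hp⟩)
  -- kernel of ev0 is contained in the ideal generated by the variables
  have hker : ∀ u : Localization S, ev0 u = 0 →
      u ∈ Ideal.map (algebraMap (MvPolynomial (Fin 2) K) (Localization S))
        (Ideal.span {(X 0 : MvPolynomial (Fin 2) K), X 1}) := by
    intro u
    refine Localization.induction_on u ?_
    rintro ⟨p, s⟩ hu
    rw [Localization.mk_eq_mk'_apply, hev0] at hu
    have hp : constantCoeff p = 0 := by
      rw [IsLocalization.lift_mk'_spec] at hu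
      rwa [mul_zero] at hu
    have hpm : p ∈ Ideal.span {(X 0 : MvPolynomial (Fin 2) K), X 1} := by
      have hmem := im_mem_pow_of (p := p) (n := 1) ?_
      · simpa using hmem
      · intro d hd
        by_contra hlt
        push_neg at hlt
        have hd0 : d = 0 := by
          ext i; fin_cases i <;> simp <;> omega
        rw [hd0] at hd
        exact hd (by rw [← constantCoeff_eq]; exact hp)
    have hmk : (Localization.mk p s : Localization S) = Localization.mk 1 s *
        algebraMap (MvPolynomial (Fin 2) K) (Localization S) p := by
      rw [← Localization.mk_one_eq_algebraMap, Localization.mk_mul, one_mul, mul_one]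
    show (Localization.mk p s : Localization S) ∈ Ideal.map
      (algebraMap (MvPolynomial (Fin 2) K) (Localization S))
      (Ideal.span {(X 0 : MvPolynomial (Fin 2) K), X 1})
    rw [hmk]
    exact Ideal.mul_mem_left _ _ (Ideal.mem_map_of_mem _ hpm)
  -- images of the variables
  set xb : Localization S ⧸ J := φ (X 0) with hxb
  set yb : Localization S ⧸ J := φ (X 1) with hyb
  set m : Ideal (Localization S ⧸ J) := Ideal.span {xb, yb} with hm
  have hmmap : Ideal.map φ (Ideal.span {(X 0 : MvPolynomial (Fin 2) K), X 1}) = m := by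
    rw [Ideal.map_span, Set.image_insert_eq, Set.image_singleton]
  have hYmap : Ideal.map φ (Ideal.span {(X 1 : MvPolynomial (Fin 2) K)}) = Ideal.span {yb} := by
    rw [Ideal.map_span, Set.image_singleton]
  have hybm : yb ∈ m := Ideal.subset_span (by simp)
  have hYm : Ideal.span {yb} ≤ m := Ideal.span_mono (Set.subset_insert _ _)
  -- f and g vanish in the quotient
  have hvanish : ∀ p ∈ ({f, g} : Set (MvPolynomial (Fin 2) K)), φ p = 0 := by
    intro p hp
    have : algebraMap (MvPolynomial (Fin 2) K) (Localization S) p ∈ J :=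
      Ideal.mem_map_of_mem _ (Ideal.subset_span hp)
    rw [hφdef, RingHom.comp_apply, hπdef]
    exact (Ideal.Quotient.eq_zero_iff_mem).mpr this
  -- the relation coming from f
  have hx : xb ∈ Ideal.span {yb} ⊔ m ^ 2 := by
    set a := coeff (Finsupp.single 0 1) f with ha
    have hf1mem : f - C a * X 0 ∈ (Ideal.span {(X 1 : MvPolynomial (Fin 2) K)})
        ⊔ (Ideal.span {(X 0 : MvPolynomial (Fin 2) K), X 1}) ^ 2 := by
      apply im_mem_Y_sup_sq
      · rw [coeff_sub, coeff_C_mul, coeff_X', if_neg (by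
          intro h
          have := congrArg (fun d : Fin 2 →₀ ℕ => d 0) h
          simp at this), mul_zero, sub_zero, ← constantCoeff_eq]
        exact hf0
      · rw [coeff_sub, coeff_C_mul, coeff_X', if_pos rfl, mul_one, ← ha, sub_self]
    have h1 : φ (f - C a * X 0) ∈ Ideal.span {yb} ⊔ m ^ 2 := by
      have hmem := Ideal.mem_map_of_mem φ hf1mem
      simpa only [Ideal.map_sup, Ideal.map_pow, hmmap, hYmap] using hmem
    have h2 : φ (C a) * xb = - φ (f - C a * X 0) := by
      have h3 : φ (C a * X 0) + φ (f - C a * X 0) = 0 := by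
        rw [← map_add]
        have : C a * X 0 + (f - C a * X 0) = f := by ring
        rw [this]
        exact hvanish f (by simp)
      rw [map_mul] at h3
      exact eq_neg_of_add_eq_zero_left h3
    have hainv : IsUnit (φ (C a)) := by
      refine IsUnit.of_mul_eq_one (φ (C a⁻¹)) ?_
      rw [← map_mul, ← C_mul, mul_inv_cancel₀ hfx, C_1, map_one]
    obtain ⟨v, hv⟩ := hainv
    have hxv : xb = ↑v⁻¹ * (φ (C a) * xb) := by
      rw [← hv, Units.inv_mul_cancel_left]
    rw [hxv, h2]
    exact Ideal.mul_mem_left _ _ (neg_mem h1)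
  -- the relation coming from g
  have hyk : yb ^ k ∈ m ^ (k + 1) := by
    set b := coeff (Finsupp.single 1 k) g with hb
    have hg1mem : g - C b * X 1 ^ k ∈
        (Ideal.span {(X 0 : MvPolynomial (Fin 2) K), X 1}) ^ (k + 1) := by
      apply im_mem_pow_of
      intro d hd
      rw [coeff_sub, coeff_C_mul, coeff_X_pow] at hd
      by_cases hdeq : Finsupp.single 1 k = d
      · rw [if_pos hdeq, mul_one, ← hdeq] at hd
        rw [← hb] at hd
        simp at hd
      · rw [if_neg hdeq, mul_zero, sub_zero] at hd
        by_contra hlt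
        push_neg at hlt
        apply hd
        apply hglow
        · rw [im_degsum]; omega
        · exact fun h => hdeq h.symm
    have h1 : φ (g - C b * X 1 ^ k) ∈ m ^ (k + 1) := by
      have hmem := Ideal.mem_map_of_mem φ hg1mem
      simpa only [Ideal.map_pow, hmmap] using hmem
    have h2 : φ (C b) * yb ^ k = - φ (g - C b * X 1 ^ k) := by
      have h3 : φ (C b * X 1 ^ k) + φ (g - C b * X 1 ^ k) = 0 := by
        rw [← map_add]
        have : C b * X 1 ^ k + (g - C b * X 1 ^ k) = g := by ring
        rw [this]
        exact hvanish g (by simp)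
      rw [map_mul, map_pow] at h3
      exact eq_neg_of_add_eq_zero_left h3
    have hbinv : IsUnit (φ (C b)) := by
      refine IsUnit.of_mul_eq_one (φ (C b⁻¹)) ?_
      rw [← map_mul, ← C_mul, mul_inv_cancel₀ hgk, C_1, map_one]
    obtain ⟨v, hv⟩ := hbinv
    have hyv : yb ^ k = ↑v⁻¹ * (φ (C b) * yb ^ k) := by
      rw [← hv, Units.inv_mul_cancel_left]
    rw [hyv, h2]
    exact Ideal.mul_mem_left _ _ (neg_mem h1)
  -- the key filtration inequality
  have hm2 : m ≤ Ideal.span {yb} ⊔ m ^ 2 := by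
    refine Ideal.span_le.mpr ?_
    rintro z hz
    rcases hz with rfl | hz
    · exact hx
    · rw [Set.mem_singleton_iff] at hz
      subst hz
      exact Ideal.mem_sup_left (Ideal.subset_span rfl)
  have hstep : ∀ n : ℕ, m ^ n ≤ (Ideal.span {yb}) ^ n ⊔ m ^ (n + 1) := by
    intro n
    induction n with
    | zero => simp
    | succ n ih =>
      have h1 : m ^ (n + 1) ≤ ((Ideal.span {yb}) ^ n ⊔ m ^ (n + 1)) *
          (Ideal.span {yb} ⊔ m ^ 2) := by
        rw [pow_succ]
        exact Ideal.mul_mono ih hm2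
      refine h1.trans ?_
      rw [Ideal.sup_mul, Ideal.mul_sup, Ideal.mul_sup]
      refine sup_le (sup_le ?_ ?_) (sup_le ?_ ?_)
      · rw [← pow_succ]
        exact le_sup_left
      · refine le_sup_of_le_right ?_
        calc (Ideal.span {yb}) ^ n * m ^ 2 ≤ m ^ n * m ^ 2 :=
              Ideal.mul_mono_left (Ideal.pow_right_mono hYm n)
          _ = m ^ (n + 2) := by rw [← pow_add]
      · refine le_sup_of_le_right ?_
        calc m ^ (n + 1) * Ideal.span {yb} ≤ m ^ (n + 1) * m := Ideal.mul_mono_right hYm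
          _ = m ^ (n + 2) := (pow_succ m (n + 1)).symm
      · refine le_sup_of_le_right ?_
        calc m ^ (n + 1) * m ^ 2 = m ^ (n + 3) := by rw [← pow_add]
          _ ≤ m ^ (n + 2) := Ideal.pow_le_pow_right (by omega)
  have hmk : m ^ k ≤ m ^ (k + 1) := by
    refine (hstep k).trans (sup_le ?_ le_rfl)
    rw [Ideal.span_singleton_pow]
    exact Ideal.span_le.mpr (Set.singleton_subset_iff.mpr hyk)
  -- m is contained in the Jacobson radical
  have hjac : m ≤ Ideal.jacobson ⊥ := by
    intro z hz
    rw [Ideal.mem_jacobson_bot]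
    intro w
    have hzw : z * w ∈ m := Ideal.mul_mem_right _ _ hz
    rw [← hmmap, hφdef, ← Ideal.map_map] at hzw
    obtain ⟨ζ, hζ, hζeq⟩ :=
      (Ideal.mem_map_iff_of_surjective π Ideal.Quotient.mk_surjective).mp hzw
    have hev0ζ : ev0 ζ = 0 := by
      have hle : Ideal.map (algebraMap (MvPolynomial (Fin 2) K) (Localization S))
          (Ideal.span {(X 0 : MvPolynomial (Fin 2) K), X 1}) ≤ RingHom.ker ev0 := by
        rw [Ideal.map_le_iff_le_comap]
        refine Ideal.span_le.mpr ?_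
        rintro z hz
        rcases hz with rfl | hz
        · simp [Ideal.mem_comap, RingHom.mem_ker, hev0_alg]
        · rw [Set.mem_singleton_iff] at hz
          subst hz
          simp [Ideal.mem_comap, RingHom.mem_ker, hev0_alg]
      exact hle hζ
    have h1 : ev0 (ζ + 1) ≠ 0 := by
      rw [map_add, hev0ζ, map_one, zero_add]
      exact one_ne_zero
    have h2 := (hunit _ h1).map π
    rw [map_add, map_one, hζeq] at h2
    exact h2
  -- Nakayama: m^k = ⊥
  have hfg : (m ^ k).FG :=
    (Submodule.fg_span ((Set.finite_singleton yb).insert xb)).pow k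
  have hbot : m ^ k = ⊥ := by
    refine Submodule.eq_bot_of_le_smul_of_le_jacobson_bot m (m ^ k) hfg ?_ hjac
    rw [Ideal.smul_eq_mul, ← pow_succ']
    exact hmk
  -- every element is a scalar plus something in m
  have hbridge : ∀ (c : K) (z : Localization S ⧸ J), c • z = φ (C c) * z := by
    intro c z
    obtain ⟨w, rfl⟩ := Ideal.Quotient.mk_surjective (I := J) z
    calc c • (π w) = π (c • w) := (Submodule.Quotient.mk_smul J c w).symm
      _ = π ((algebraMap K (Localization S) c) * w) := by rw [Algebra.smul_def]
      _ = φ (C c) * π w := by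
          rw [map_mul]
          congr 1
  have hdecomp : ∀ q : Localization S ⧸ J, ∃ c : K, q - φ (C c) ∈ m := by
    intro q
    obtain ⟨u, rfl⟩ := Ideal.Quotient.mk_surjective (I := J) q
    refine ⟨ev0 u, ?_⟩
    have h1 : u - algebraMap (MvPolynomial (Fin 2) K) (Localization S) (C (ev0 u)) ∈
        Ideal.map (algebraMap (MvPolynomial (Fin 2) K) (Localization S))
          (Ideal.span {(X 0 : MvPolynomial (Fin 2) K), X 1}) := by
      apply hker
      rw [map_sub, hev0_alg, constantCoeff_C, sub_self]
    have h2 := Ideal.mem_map_of_mem π h1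
    rw [Ideal.map_map, ← hφdef, hmmap, map_sub] at h2
    exact h2
  -- spanning argument
  haveI : DecidableEq (Localization S ⧸ J) := Classical.decEq _
  set T : Submodule K (Localization S ⧸ J) :=
    Submodule.span K (((Finset.range k).image fun n : ℕ => yb ^ n) : Set (Localization S ⧸ J))
    with hT
  have hTmem : ∀ j : ℕ, ∀ q ∈ m ^ (k - j), q ∈ T := by
    intro j
    induction j with
    | zero =>
      intro q hq
      rw [Nat.sub_zero, hbot, Ideal.mem_bot] at hq
      rw [hq]
      exact T.zero_mem
    | succ j ih =>
      intro q hq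
      by_cases hjk : k ≤ j
      · have heq : k - (j + 1) = k - j := by omega
        rw [heq] at hq
        exact ih q hq
      · push_neg at hjk
        have hn : k - (j + 1) + 1 = k - j := by omega
        obtain ⟨q1, hq1, q2, hq2, rfl⟩ := Submodule.mem_sup.mp (hstep (k - (j + 1)) hq)
        rw [Ideal.span_singleton_pow, Ideal.mem_span_singleton'] at hq1
        obtain ⟨u, rfl⟩ := hq1
        obtain ⟨c, hc⟩ := hdecomp u
        have key : u * yb ^ (k - (j + 1)) + q2
            = φ (C c) * (yb ^ (k - (j + 1))) + ((u - φ (C c)) * yb ^ (k - (j + 1)) + q2) := by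
          ring
        rw [key]
        refine T.add_mem ?_ ?_
        · rw [← hbridge]
          refine T.smul_mem c ?_
          refine Submodule.subset_span ?_
          refine Finset.mem_coe.mpr (Finset.mem_image.mpr ⟨k - (j + 1), ?_, rfl⟩)
          exact Finset.mem_range.mpr (by omega)
        · apply ih
          rw [← hn]
          refine Ideal.add_mem _ ?_ hq2
          have hmul : (u - φ (C c)) * yb ^ (k - (j + 1)) ∈ m * m ^ (k - (j + 1)) :=
            Ideal.mul_mem_mul hc (Ideal.pow_mem_pow hybm _)
          rwa [← pow_succ'] at hmul
  have htop : T = ⊤ := by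
    rw [eq_top_iff]
    intro q _
    refine hTmem k q ?_
    rw [Nat.sub_self, pow_zero, Ideal.one_eq_top]
    trivial
  -- conclude
  have h2 : Module.finrank K (⊤ : Submodule K (Localization S ⧸ J)) ≤ k := by
    rw [← htop, hT]
    refine (finrank_span_le_card _).trans ?_
    rw [Finset.toFinset_coe]
    exact Finset.card_image_le.trans (le_of_eq (Finset.card_range k))
  rwa [finrank_top] at h2
end

section
/- The elliptic curve y² = x³ - 432 over ℚ has exactly 3 rational points in ℙ², namely the point at infinity and (12, ±36); equivalently, its Mordell–Weil group over ℚ is ℤ/3ℤ. -/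
lemma cube_eq_1728 {x : ℚ} (h : x ^ 3 = 1728) : x = 12 := by
  have h2 : (x - 12) * (x ^ 2 + 12 * x + 144) = 0 := by linear_combination h
  rcases mul_eq_zero.mp h2 with h3 | h3
  · linarith
  · nlinarith [sq_nonneg (x + 6)]

lemma key {x y : ℚ} (h : y ^ 2 = x ^ 3 - 432) : x = 12 ∧ (y = 36 ∨ y = -36) := by
  have hx : x ≠ 0 := by rintro rfl; nlinarith [sq_nonneg y]
  have flt : FermatLastTheoremWith ℚ 3 :=
    fermatLastTheoremFor_iff_rat.mp fermatLastTheoremThree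
  set u : ℚ := (36 + y) / (6 * x) with hu
  set v : ℚ := (36 - y) / (6 * x) with hv
  have huv : u ^ 3 + v ^ 3 = 1 ^ 3 := by
    rw [hu, hv]
    field_simp
    linear_combination 216 * h
  have hcase : u = 0 ∨ v = 0 := by
    by_contra hc
    push_neg at hc
    exact flt u v 1 hc.1 hc.2 one_ne_zero huv
  rcases hcase with h0 | h0
  · have hy : y = -36 := by
      have := (div_eq_zero_iff.mp h0).resolve_right (by simp [hx])
      linarith
    subst hy
    have : x ^ 3 = 1728 := by linarith
    exact ⟨cube_eq_1728 this, Or.inr rfl⟩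
  · have hy : y = 36 := by
      have := (div_eq_zero_iff.mp h0).resolve_right (by simp [hx])
      linarith
    subst hy
    have : x ^ 3 = 1728 := by linarith
    exact ⟨cube_eq_1728 this, Or.inl rfl⟩

/-- The elliptic curve `y² = x³ - 432` over `ℚ` (the Weierstrass form of the Fermat
cubic) has exactly three rational points: the point at infinity and `(12, ±36)`;
its Mordell–Weil group is `ℤ/3ℤ`. -/
theorem mordell_weil_fermat :
    let W : WeierstrassCurve.Affine ℚ := ⟨0, 0, 0, 0, -432⟩
    ∃ (h₁ : W.Nonsingular 12 36) (h₂ : W.Nonsingular 12 (-36)),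
      (Set.univ : Set W.Point) =
        {0, WeierstrassCurve.Affine.Point.some 12 36 h₁, WeierstrassCurve.Affine.Point.some 12 (-36) h₂} ∧
      Nonempty (W.Point ≃+ ZMod 3) := by
  intro W
  have h₁ : W.Nonsingular 12 36 := by
    rw [WeierstrassCurve.Affine.nonsingular_iff, WeierstrassCurve.Affine.equation_iff]
    norm_num [W]
  have h₂ : W.Nonsingular 12 (-36) := by
    rw [WeierstrassCurve.Affine.nonsingular_iff, WeierstrassCurve.Affine.equation_iff]
    norm_num [W]
  have hset : (Set.univ : Set W.Point) = {0, .some 12 36 h₁, .some 12 (-36) h₂} := by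
    ext P
    simp only [Set.mem_univ, Set.mem_insert_iff, Set.mem_singleton_iff, true_iff]
    cases P with
    | zero => left; rfl
    | @some x y h =>
      right
      have heq : y ^ 2 = x ^ 3 - 432 := by
        have := (WeierstrassCurve.Affine.equation_iff (W := W) (x := x) (y := y)).mp h.1
        simp only [W] at this
        linarith
      obtain ⟨hx, hy⟩ := key heq
      subst hx
      rcases hy with rfl | rfl
      · left; rfl
      · right; rfl
  refine ⟨h₁, h₂, hset, ?_⟩
  have h0P : (0 : W.Point) ≠ .some 12 36 h₁ := by simp [WeierstrassCurve.Affine.Point.zero_def]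
  have h0Q : (0 : W.Point) ≠ .some 12 (-36) h₂ := by simp [WeierstrassCurve.Affine.Point.zero_def]
  have hPQ : (WeierstrassCurve.Affine.Point.some 12 36 h₁) ≠ .some 12 (-36) h₂ := by
    simp only [ne_eq, WeierstrassCurve.Affine.Point.some.injEq]
    norm_num
  have h3 : Nat.card W.Point = 3 := by
    rw [← Set.ncard_univ, hset,
      Set.ncard_insert_of_notMem (by simp [h0P, h0Q]) (Set.toFinite _), Set.ncard_pair hPQ]
  haveI : Fact (Nat.Prime 3) := ⟨by norm_num⟩
  exact ⟨addEquivOfPrimeCardEq h3 (by simp)⟩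
end

section
/- For each of the nine flexes P of the Fermat cubic and each sextactic point S (a common zero of x³+y³+z³ and (x³-y³)(y³-z³)(x³-z³)), the tangent line to the Fermat cubic at S passes through some flex; moreover, for each flex there are exactly three sextactic points whose tangent lines pass through it. -/
open Projectivization

private lemma vec_ne_zero' {x y z : ℂ} (i : Fin 3) (h : ![x, y, z] i ≠ 0) :
    ![x, y, z] ≠ 0 := fun h0 => h (by rw [h0]; rfl)

private lemma rep_zero_absurd {S : Projectivization ℂ (Fin 3 → ℂ)}
    (h0 : S.rep 0 = 0) (h1 : S.rep 1 = 0) (h2 : S.rep 2 = 0) : False := by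
  apply S.rep_nonzero
  funext i
  fin_cases i <;> assumption

private lemma mk_ne_gen' {v w : Fin 3 → ℂ} (hv : v ≠ 0) (hw : w ≠ 0) (i j : Fin 3)
    (hvi : v i = 1) (hwi : w i = 1) (hne : v j ≠ w j) :
    Projectivization.mk ℂ v hv ≠ Projectivization.mk ℂ w hw := by
  intro h
  obtain ⟨u, hu⟩ := (mk_eq_mk_iff ℂ _ _ hv hw).mp h
  have h1 : (u : ℂ) * w i = v i := by
    have := congrFun hu i
    simpa [Units.smul_def] using this
  rw [hvi, hwi, mul_one] at h1
  have h2 : (u : ℂ) * w j = v j := by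
    have := congrFun hu j
    simpa [Units.smul_def] using this
  rw [h1, one_mul] at h2
  exact hne h2.symm

private lemma cube_cases' {ω x y : ℂ} (hω : ω ^ 2 + ω + 1 = 0)
    (h : x ^ 3 = y ^ 3) : x = y ∨ x = ω * y ∨ x = ω ^ 2 * y := by
  have hω3 : ω ^ 3 = 1 := by linear_combination (ω - 1) * hω
  have key : (x - y) * ((x - ω * y) * (x - ω ^ 2 * y)) = 0 := by
    linear_combination h + (x * y ^ 2 - x ^ 2 * y) * hω + (x * y ^ 2 - y ^ 3) * hω3
  rcases mul_eq_zero.mp key with h1 | h1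
  · exact Or.inl (by linear_combination h1)
  · rcases mul_eq_zero.mp h1 with h2 | h2
    · exact Or.inr (Or.inl (by linear_combination h2))
    · exact Or.inr (Or.inr (by linear_combination h2))

private lemma solve_core' {ω μ l a b c : ℂ} (hω : ω ^ 2 + ω + 1 = 0) (hμ : μ ^ 3 = -2)
    (hl : l ^ 3 = 1) (hab : a ^ 2 = l * b ^ 2)
    (hF : a ^ 3 + b ^ 3 + c ^ 3 = 0)
    (hH : (a ^ 3 - b ^ 3) * (b ^ 3 - c ^ 3) * (a ^ 3 - c ^ 3) = 0)
    (hne : ¬(a = 0 ∧ b = 0 ∧ c = 0)) :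
    b ≠ 0 ∧ a = l ^ 2 * b ∧ (c = μ * b ∨ c = ω * μ * b ∨ c = ω ^ 2 * μ * b) := by
  have hl0 : l ≠ 0 := by intro h; rw [h] at hl; norm_num at hl
  have h6 : a ^ 6 = b ^ 6 := by
    linear_combination (a ^ 4 + l * a ^ 2 * b ^ 2 + l ^ 2 * b ^ 4) * hab + b ^ 6 * hl
  rcases mul_eq_zero.mp hH with h1 | h3
  · rcases mul_eq_zero.mp h1 with h1 | h2
    · have hb : b ≠ 0 := by
        intro hb
        apply hne
        have ha : a = 0 := by
          have : a ^ 3 = 0 := by rw [hb] at h1; linear_combination h1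
          exact pow_eq_zero_iff (by norm_num) |>.mp this
        have hc : c = 0 := by
          have : c ^ 3 = 0 := by rw [hb, ha] at hF; linear_combination hF
          exact pow_eq_zero_iff (by norm_num) |>.mp this
        exact ⟨ha, hb, hc⟩
      have h5 : a * l = b := by
        have h5' : (a * l - b) * b ^ 2 = 0 := by linear_combination h1 - a * hab
        rcases mul_eq_zero.mp h5' with h | h
        · linear_combination h
        · exact ((hb ((pow_eq_zero_iff (by norm_num)).mp h)).elim)
      have ha : a = l ^ 2 * b := by linear_combination l ^ 2 * h5 - a * hl
      have hc3 : c ^ 3 = (μ * b) ^ 3 := by linear_combination hF - h1 - b ^ 3 * hμ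
      refine ⟨hb, ha, ?_⟩
      rcases cube_cases' hω hc3 with h | h | h
      · exact Or.inl h
      · exact Or.inr (Or.inl (by linear_combination h))
      · exact Or.inr (Or.inr (by linear_combination h))
    · exfalso
      have ha3 : a ^ 3 = -(2 * b ^ 3) := by linear_combination hF + h2
      have h36 : (3 : ℂ) * b ^ 6 = 0 := by linear_combination h6 - (a ^ 3 - 2 * b ^ 3) * ha3
      have hb : b = 0 := by
        have : b ^ 6 = 0 := by linear_combination h36 / 3
        exact pow_eq_zero_iff (by norm_num) |>.mp this
      apply hne
      have hc : c = 0 := by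
        have : c ^ 3 = 0 := by rw [hb] at h2; linear_combination -h2
        exact pow_eq_zero_iff (by norm_num) |>.mp this
      have ha : a = 0 := by
        have : a ^ 3 = 0 := by rw [hb, hc] at hF; linear_combination hF
        exact pow_eq_zero_iff (by norm_num) |>.mp this
      exact ⟨ha, hb, hc⟩
  · exfalso
    have hb3 : b ^ 3 = -(2 * a ^ 3) := by linear_combination hF + h3
    have h36 : (3 : ℂ) * a ^ 6 = 0 := by linear_combination -h6 - (b ^ 3 - 2 * a ^ 3) * hb3
    have ha : a = 0 := by
      have : a ^ 6 = 0 := by linear_combination h36 / 3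
      exact pow_eq_zero_iff (by norm_num) |>.mp this
    apply hne
    have hb : b = 0 := by
      have : b ^ 2 = 0 := by
        have : l * b ^ 2 = 0 := by rw [ha] at hab; linear_combination -hab
        exact (mul_eq_zero.mp this).resolve_left hl0
      exact pow_eq_zero_iff (by norm_num) |>.mp this
    have hc : c = 0 := by
      have : c ^ 3 = 0 := by rw [ha, hb] at hF; linear_combination hF
      exact pow_eq_zero_iff (by norm_num) |>.mp this
    exact ⟨ha, hb, hc⟩

open Projectivization in
/-- Each tangent line to the Fermat cubic at a sextactic point passes through a flex
point; moreover, through each flex point pass the tangent lines of exactly three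
sextactic points. Here sextactic points are the common zeros of `F = x³+y³+z³` and
`H₂(F) = (x³-y³)(y³-z³)(x³-z³)`, flexes are the points of `F = 0` with `xyz = 0`,
and the tangent line at `[a:b:c]` is `a²x + b²y + c²z = 0`. -/
theorem sextactic_tangents_through_flexes :
    (∀ S : Projectivization ℂ (Fin 3 → ℂ),
      (S.rep 0) ^ 3 + (S.rep 1) ^ 3 + (S.rep 2) ^ 3 = 0 →
      ((S.rep 0) ^ 3 - (S.rep 1) ^ 3) * ((S.rep 1) ^ 3 - (S.rep 2) ^ 3) *
        ((S.rep 0) ^ 3 - (S.rep 2) ^ 3) = 0 →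
      ∃ P : Projectivization ℂ (Fin 3 → ℂ),
        (P.rep 0) ^ 3 + (P.rep 1) ^ 3 + (P.rep 2) ^ 3 = 0 ∧
        P.rep 0 * P.rep 1 * P.rep 2 = 0 ∧
        (S.rep 0) ^ 2 * P.rep 0 + (S.rep 1) ^ 2 * P.rep 1 + (S.rep 2) ^ 2 * P.rep 2 = 0) ∧
    (∀ P : Projectivization ℂ (Fin 3 → ℂ),
      (P.rep 0) ^ 3 + (P.rep 1) ^ 3 + (P.rep 2) ^ 3 = 0 →
      P.rep 0 * P.rep 1 * P.rep 2 = 0 →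
      {S : Projectivization ℂ (Fin 3 → ℂ) |
        (S.rep 0) ^ 3 + (S.rep 1) ^ 3 + (S.rep 2) ^ 3 = 0 ∧
        ((S.rep 0) ^ 3 - (S.rep 1) ^ 3) * ((S.rep 1) ^ 3 - (S.rep 2) ^ 3) *
          ((S.rep 0) ^ 3 - (S.rep 2) ^ 3) = 0 ∧
        (S.rep 0) ^ 2 * P.rep 0 + (S.rep 1) ^ 2 * P.rep 1 + (S.rep 2) ^ 2 * P.rep 2 = 0
        }.ncard = 3) := by
  constructor
  · -- Part 1 : tangent at a sextactic point passes through a flex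
    intro S hF hH
    set a := S.rep 0 with ha
    set b := S.rep 1 with hb
    set c := S.rep 2 with hc
    have key : ∀ (v : Fin 3 → ℂ) (hv : v ≠ 0),
        (v 0 ^ 3 + v 1 ^ 3 + v 2 ^ 3 = 0) → (v 0 * v 1 * v 2 = 0) →
        (a ^ 2 * v 0 + b ^ 2 * v 1 + c ^ 2 * v 2 = 0) →
        ∃ P : Projectivization ℂ (Fin 3 → ℂ),
          (P.rep 0) ^ 3 + (P.rep 1) ^ 3 + (P.rep 2) ^ 3 = 0 ∧
          P.rep 0 * P.rep 1 * P.rep 2 = 0 ∧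
          a ^ 2 * P.rep 0 + b ^ 2 * P.rep 1 + c ^ 2 * P.rep 2 = 0 := by
      intro v hv e1 e2 e3
      obtain ⟨u, hu⟩ := exists_smul_eq_mk_rep ℂ v hv
      refine ⟨Projectivization.mk ℂ v hv, ?_, ?_, ?_⟩ <;>
        rw [← hu] <;>
        simp only [Pi.smul_apply, Units.smul_def, smul_eq_mul]
      · linear_combination (u : ℂ) ^ 3 * e1
      · linear_combination (u : ℂ) ^ 3 * e2
      · linear_combination (u : ℂ) * e3
    rcases mul_eq_zero.mp hH with h12 | h13
    · rcases mul_eq_zero.mp h12 with h12 | h23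
      · -- a³ = b³, use [b², -a², 0]
        have hbne : b ≠ 0 := by
          intro h
          have ha0 : a = 0 := by
            have : a ^ 3 = 0 := by rw [h] at h12; linear_combination h12
            exact pow_eq_zero_iff (by norm_num) |>.mp this
          have hc0 : c = 0 := by
            have : c ^ 3 = 0 := by rw [h, ha0] at hF; linear_combination hF
            exact pow_eq_zero_iff (by norm_num) |>.mp this
          exact rep_zero_absurd ha0 h hc0
        refine key ![b ^ 2, -(a ^ 2), 0]
            (vec_ne_zero' 0 (by simpa using pow_ne_zero 2 hbne)) ?_ ?_ ?_ <;>
          simp only [Matrix.cons_val_zero, Matrix.cons_val_one, Matrix.head_cons,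
            Matrix.cons_val_two, Matrix.tail_cons]
        · linear_combination (-(b ^ 3) - a ^ 3) * h12
        · ring
        · ring
      · -- b³ = c³, use [0, c², -b²]
        have hcne : c ≠ 0 := by
          intro h
          have hb0 : b = 0 := by
            have : b ^ 3 = 0 := by rw [h] at h23; linear_combination h23
            exact pow_eq_zero_iff (by norm_num) |>.mp this
          have ha0 : a = 0 := by
            have : a ^ 3 = 0 := by rw [h, hb0] at hF; linear_combination hF
            exact pow_eq_zero_iff (by norm_num) |>.mp this
          exact rep_zero_absurd ha0 hb0 h
        refine key ![0, c ^ 2, -(b ^ 2)]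
            (vec_ne_zero' 1 (by simpa using pow_ne_zero 2 hcne)) ?_ ?_ ?_ <;>
          simp only [Matrix.cons_val_zero, Matrix.cons_val_one, Matrix.head_cons,
            Matrix.cons_val_two, Matrix.tail_cons]
        · linear_combination (-(c ^ 3) - b ^ 3) * h23
        · ring
        · ring
    · -- a³ = c³, use [c², 0, -a²]
      have hcne : c ≠ 0 := by
        intro h
        have ha0 : a = 0 := by
          have : a ^ 3 = 0 := by rw [h] at h13; linear_combination h13
          exact pow_eq_zero_iff (by norm_num) |>.mp this
        have hb0 : b = 0 := by
          have : b ^ 3 = 0 := by rw [h, ha0] at hF; linear_combination hF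
          exact pow_eq_zero_iff (by norm_num) |>.mp this
        exact rep_zero_absurd ha0 hb0 h
      refine key ![c ^ 2, 0, -(a ^ 2)]
          (vec_ne_zero' 0 (by simpa using pow_ne_zero 2 hcne)) ?_ ?_ ?_ <;>
        simp only [Matrix.cons_val_zero, Matrix.cons_val_one, Matrix.head_cons,
          Matrix.cons_val_two, Matrix.tail_cons]
      · linear_combination (-(c ^ 3) - a ^ 3) * h13
      · ring
      · ring
  · -- Part 2 : exactly three sextactic points per flex
    intro P hPF hZ
    obtain ⟨ν, hν⟩ : ∃ ν : ℂ, ν ^ 2 = -3 := IsAlgClosed.exists_pow_nat_eq (-3) (by norm_num)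
    obtain ⟨μ, hμ⟩ : ∃ μ : ℂ, μ ^ 3 = -2 := IsAlgClosed.exists_pow_nat_eq (-2) (by norm_num)
    set ω : ℂ := (-1 + ν) / 2 with hωdef
    have hω : ω ^ 2 + ω + 1 = 0 := by rw [hωdef]; linear_combination hν / 4
    have hω3 : ω ^ 3 = 1 := by linear_combination (ω - 1) * hω
    have hμ0 : μ ≠ 0 := by intro h; rw [h] at hμ; norm_num at hμ
    have hω1 : ω ≠ 1 := by intro h; rw [h] at hω; norm_num at hω
    have hω21 : ω ^ 2 ≠ 1 := by
      intro h
      have h2 : ω = -2 := by linear_combination hω - h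
      rw [h2] at h; norm_num at h
    have hω2ω : ω ^ 2 ≠ ω := by
      intro h
      have h2 : ω = -(1 / 2) := by linear_combination (hω - h) / 2
      rw [h2] at h; norm_num at h
    have hd1 : ∀ s t : ℂ, s - t ≠ 0 → s * μ ≠ t * μ := by
      intro s t hst h
      have h0 : (s - t) * μ = 0 := by linear_combination h
      rcases mul_eq_zero.mp h0 with h1 | h1
      · exact hst h1
      · exact hμ0 h1
    rcases mul_eq_zero.mp hZ with hpq0 | hr0
    · rcases mul_eq_zero.mp hpq0 with hp0 | hq0
      · -- case P.rep 0 = 0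
        set q := P.rep 1 with hqdef
        set r := P.rep 2 with hrdef
        have hqr : q ^ 3 + r ^ 3 = 0 := by linear_combination hPF - (P.rep 0) ^ 2 * hp0
        have hq : q ≠ 0 := by
          intro h
          have hr' : r = 0 := by
            have : r ^ 3 = 0 := by rw [h] at hqr; linear_combination hqr
            exact pow_eq_zero_iff (by norm_num) |>.mp this
          exact rep_zero_absurd hp0 h hr'
        have hr : r ≠ 0 := by
          intro h
          have hq' : q = 0 := by
            have : q ^ 3 = 0 := by rw [h] at hqr; linear_combination hqr
            exact pow_eq_zero_iff (by norm_num) |>.mp this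
          exact rep_zero_absurd hp0 hq' h
        set l : ℂ := -r / q with hldef
        have hl : l ^ 3 = 1 := by
          rw [hldef]
          field_simp
          linear_combination -hqr
        have hlp : l * q = -r := by rw [hldef]; field_simp
        have key : ∀ x : ℂ, ![x, l ^ 2, (1 : ℂ)] ≠ 0 := fun x => vec_ne_zero' 2 (by simp)
        rw [Set.ncard_eq_three]
        refine ⟨Projectivization.mk ℂ ![μ, l ^ 2, 1] (key μ),
          Projectivization.mk ℂ ![ω * μ, l ^ 2, 1] (key _),
          Projectivization.mk ℂ ![ω ^ 2 * μ, l ^ 2, 1] (key _),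
          mk_ne_gen' _ _ 2 0 rfl rfl (by
            simp only [Matrix.cons_val_zero]
            have := hd1 1 ω (by intro h; exact hω1 (by linear_combination -h))
            simpa using this),
          mk_ne_gen' _ _ 2 0 rfl rfl (by
            simp only [Matrix.cons_val_zero]
            have := hd1 1 (ω ^ 2) (by intro h; exact hω21 (by linear_combination -h))
            simpa using this),
          mk_ne_gen' _ _ 2 0 rfl rfl (by
            simp only [Matrix.cons_val_zero]
            exact hd1 ω (ω ^ 2) (by intro h; exact hω2ω (by linear_combination -h))), ?_⟩
        ext S
        simp only [Set.mem_setOf_eq, Set.mem_insert_iff, Set.mem_singleton_iff]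
        constructor
        · rintro ⟨hSF, hSH, hST⟩
          set a := S.rep 0 with hadef
          set b := S.rep 1 with hbdef
          set c := S.rep 2 with hcdef
          have hab : b ^ 2 = l * c ^ 2 := by
            have h' : b ^ 2 * q + c ^ 2 * r = 0 := by linear_combination hST - a ^ 2 * hp0
            rw [hldef]
            field_simp
            linear_combination h'
          have hne : ¬(b = 0 ∧ c = 0 ∧ a = 0) := fun ⟨h1, h2, h3⟩ => rep_zero_absurd h3 h1 h2
          have hF' : b ^ 3 + c ^ 3 + a ^ 3 = 0 := by linear_combination hSF
          have hH' : (b ^ 3 - c ^ 3) * (c ^ 3 - a ^ 3) * (b ^ 3 - a ^ 3) = 0 := by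
            linear_combination hSH
          obtain ⟨hcne, hb2, hax⟩ := solve_core' hω hμ hl hab hF' hH' hne
          have hSmk : ∀ (x : ℂ), a = x * c →
              S = Projectivization.mk ℂ ![x, l ^ 2, 1] (key x) := by
            intro x hax'
            rw [← S.mk_rep]
            apply (mk_eq_mk_iff ℂ _ _ S.rep_nonzero (key x)).mpr
            refine ⟨Units.mk0 c hcne, ?_⟩
            have hrepv : S.rep = ![a, b, c] := by funext i; fin_cases i <;> rfl
            rw [hrepv]
            funext i
            fin_cases i <;>
              simp only [Units.smul_def, Pi.smul_apply, smul_eq_mul, Units.val_mk0] <;>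
              norm_num
            · linear_combination -hax'
            · linear_combination -hb2
          rcases hax with h | h | h
          · exact Or.inl (hSmk μ h)
          · exact Or.inr (Or.inl (hSmk (ω * μ) h))
          · exact Or.inr (Or.inr (hSmk (ω ^ 2 * μ) h))
        · intro h
          have main : ∀ x : ℂ, x ^ 3 = -2 →
              ((Projectivization.mk ℂ ![x, l ^ 2, 1] (key x)).rep 0) ^ 3 +
                ((Projectivization.mk ℂ ![x, l ^ 2, 1] (key x)).rep 1) ^ 3 +
                ((Projectivization.mk ℂ ![x, l ^ 2, 1] (key x)).rep 2) ^ 3 = 0 ∧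
              (((Projectivization.mk ℂ ![x, l ^ 2, 1] (key x)).rep 0) ^ 3 -
                  ((Projectivization.mk ℂ ![x, l ^ 2, 1] (key x)).rep 1) ^ 3) *
                (((Projectivization.mk ℂ ![x, l ^ 2, 1] (key x)).rep 1) ^ 3 -
                  ((Projectivization.mk ℂ ![x, l ^ 2, 1] (key x)).rep 2) ^ 3) *
                (((Projectivization.mk ℂ ![x, l ^ 2, 1] (key x)).rep 0) ^ 3 -
                  ((Projectivization.mk ℂ ![x, l ^ 2, 1] (key x)).rep 2) ^ 3) = 0 ∧
              ((Projectivization.mk ℂ ![x, l ^ 2, 1] (key x)).rep 0) ^ 2 * P.rep 0 +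
                ((Projectivization.mk ℂ ![x, l ^ 2, 1] (key x)).rep 1) ^ 2 * q +
                ((Projectivization.mk ℂ ![x, l ^ 2, 1] (key x)).rep 2) ^ 2 * r = 0 := by
            intro x hx3
            obtain ⟨u, hu⟩ := exists_smul_eq_mk_rep ℂ _ (key x)
            refine ⟨?_, ?_, ?_⟩ <;> rw [← hu] <;>
              simp only [Units.smul_def, Pi.smul_apply, smul_eq_mul,
                Matrix.cons_val_zero, Matrix.cons_val_one, Matrix.head_cons,
                Matrix.cons_val_two, Matrix.tail_cons]
            · linear_combination ((u : ℂ) ^ 3 * (l ^ 3 + 1)) * hl + (u : ℂ) ^ 3 * hx3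
            · apply mul_eq_zero_of_left
              apply mul_eq_zero_of_right
              linear_combination ((u : ℂ) ^ 3 * (l ^ 3 + 1)) * hl
            · linear_combination ((u : ℂ) ^ 2 * l * q) * hl + (u : ℂ) ^ 2 * hlp +
                ((u : ℂ) * x) ^ 2 * hp0
          rcases h with rfl | rfl | rfl
          · exact main μ hμ
          · exact main (ω * μ) (by linear_combination μ ^ 3 * hω3 + hμ)
          · exact main (ω ^ 2 * μ) (by linear_combination (ω ^ 3 + 1) * μ ^ 3 * hω3 + hμ)
      · -- case P.rep 1 = 0
        set p := P.rep 0 with hpdef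
        set r := P.rep 2 with hrdef
        have hpr : p ^ 3 + r ^ 3 = 0 := by linear_combination hPF - (P.rep 1) ^ 2 * hq0
        have hp : p ≠ 0 := by
          intro h
          have hr' : r = 0 := by
            have : r ^ 3 = 0 := by rw [h] at hpr; linear_combination hpr
            exact pow_eq_zero_iff (by norm_num) |>.mp this
          exact rep_zero_absurd h hq0 hr'
        have hr : r ≠ 0 := by
          intro h
          have hp' : p = 0 := by
            have : p ^ 3 = 0 := by rw [h] at hpr; linear_combination hpr
            exact pow_eq_zero_iff (by norm_num) |>.mp this
          exact rep_zero_absurd hp' hq0 h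
        set l : ℂ := -r / p with hldef
        have hl : l ^ 3 = 1 := by
          rw [hldef]
          field_simp
          linear_combination -hpr
        have hlp : l * p = -r := by rw [hldef]; field_simp
        have key : ∀ x : ℂ, ![l ^ 2, x, (1 : ℂ)] ≠ 0 := fun x => vec_ne_zero' 2 (by simp)
        rw [Set.ncard_eq_three]
        refine ⟨Projectivization.mk ℂ ![l ^ 2, μ, 1] (key μ),
          Projectivization.mk ℂ ![l ^ 2, ω * μ, 1] (key _),
          Projectivization.mk ℂ ![l ^ 2, ω ^ 2 * μ, 1] (key _),
          mk_ne_gen' _ _ 2 1 rfl rfl (by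
            simp only [Matrix.cons_val_one, Matrix.head_cons]
            have := hd1 1 ω (by intro h; exact hω1 (by linear_combination -h))
            simpa using this),
          mk_ne_gen' _ _ 2 1 rfl rfl (by
            simp only [Matrix.cons_val_one, Matrix.head_cons]
            have := hd1 1 (ω ^ 2) (by intro h; exact hω21 (by linear_combination -h))
            simpa using this),
          mk_ne_gen' _ _ 2 1 rfl rfl (by
            simp only [Matrix.cons_val_one, Matrix.head_cons]
            exact hd1 ω (ω ^ 2) (by intro h; exact hω2ω (by linear_combination -h))), ?_⟩
        ext S
        simp only [Set.mem_setOf_eq, Set.mem_insert_iff, Set.mem_singleton_iff]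
        constructor
        · rintro ⟨hSF, hSH, hST⟩
          set a := S.rep 0 with hadef
          set b := S.rep 1 with hbdef
          set c := S.rep 2 with hcdef
          have hab : a ^ 2 = l * c ^ 2 := by
            have h' : a ^ 2 * p + c ^ 2 * r = 0 := by linear_combination hST - b ^ 2 * hq0
            rw [hldef]
            field_simp
            linear_combination h'
          have hne : ¬(a = 0 ∧ c = 0 ∧ b = 0) := fun ⟨h1, h2, h3⟩ => rep_zero_absurd h1 h3 h2
          have hF' : a ^ 3 + c ^ 3 + b ^ 3 = 0 := by linear_combination hSF
          have hH' : (a ^ 3 - c ^ 3) * (c ^ 3 - b ^ 3) * (a ^ 3 - b ^ 3) = 0 := by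
            linear_combination -hSH
          obtain ⟨hcne, ha2, hbx⟩ := solve_core' hω hμ hl hab hF' hH' hne
          have hSmk : ∀ (x : ℂ), b = x * c →
              S = Projectivization.mk ℂ ![l ^ 2, x, 1] (key x) := by
            intro x hbx'
            rw [← S.mk_rep]
            apply (mk_eq_mk_iff ℂ _ _ S.rep_nonzero (key x)).mpr
            refine ⟨Units.mk0 c hcne, ?_⟩
            have hrepv : S.rep = ![a, b, c] := by funext i; fin_cases i <;> rfl
            rw [hrepv]
            funext i
            fin_cases i <;>
              simp only [Units.smul_def, Pi.smul_apply, smul_eq_mul, Units.val_mk0] <;>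
              norm_num
            · linear_combination -ha2
            · linear_combination -hbx'
          rcases hbx with h | h | h
          · exact Or.inl (hSmk μ h)
          · exact Or.inr (Or.inl (hSmk (ω * μ) h))
          · exact Or.inr (Or.inr (hSmk (ω ^ 2 * μ) h))
        · intro h
          have main : ∀ x : ℂ, x ^ 3 = -2 →
              ((Projectivization.mk ℂ ![l ^ 2, x, 1] (key x)).rep 0) ^ 3 +
                ((Projectivization.mk ℂ ![l ^ 2, x, 1] (key x)).rep 1) ^ 3 +
                ((Projectivization.mk ℂ ![l ^ 2, x, 1] (key x)).rep 2) ^ 3 = 0 ∧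
              (((Projectivization.mk ℂ ![l ^ 2, x, 1] (key x)).rep 0) ^ 3 -
                  ((Projectivization.mk ℂ ![l ^ 2, x, 1] (key x)).rep 1) ^ 3) *
                (((Projectivization.mk ℂ ![l ^ 2, x, 1] (key x)).rep 1) ^ 3 -
                  ((Projectivization.mk ℂ ![l ^ 2, x, 1] (key x)).rep 2) ^ 3) *
                (((Projectivization.mk ℂ ![l ^ 2, x, 1] (key x)).rep 0) ^ 3 -
                  ((Projectivization.mk ℂ ![l ^ 2, x, 1] (key x)).rep 2) ^ 3) = 0 ∧
              ((Projectivization.mk ℂ ![l ^ 2, x, 1] (key x)).rep 0) ^ 2 * p +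
                ((Projectivization.mk ℂ ![l ^ 2, x, 1] (key x)).rep 1) ^ 2 * P.rep 1 +
                ((Projectivization.mk ℂ ![l ^ 2, x, 1] (key x)).rep 2) ^ 2 * r = 0 := by
            intro x hx3
            obtain ⟨u, hu⟩ := exists_smul_eq_mk_rep ℂ _ (key x)
            refine ⟨?_, ?_, ?_⟩ <;> rw [← hu] <;>
              simp only [Units.smul_def, Pi.smul_apply, smul_eq_mul,
                Matrix.cons_val_zero, Matrix.cons_val_one, Matrix.head_cons,
                Matrix.cons_val_two, Matrix.tail_cons]
            · linear_combination ((u : ℂ) ^ 3 * (l ^ 3 + 1)) * hl + (u : ℂ) ^ 3 * hx3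
            · apply mul_eq_zero_of_right
              linear_combination ((u : ℂ) ^ 3 * (l ^ 3 + 1)) * hl
            · linear_combination ((u : ℂ) ^ 2 * l * p) * hl + (u : ℂ) ^ 2 * hlp +
                ((u : ℂ) * x) ^ 2 * hq0
          rcases h with rfl | rfl | rfl
          · exact main μ hμ
          · exact main (ω * μ) (by linear_combination μ ^ 3 * hω3 + hμ)
          · exact main (ω ^ 2 * μ) (by linear_combination (ω ^ 3 + 1) * μ ^ 3 * hω3 + hμ)
    · -- case P.rep 2 = 0
      set p := P.rep 0 with hpdef
      set q := P.rep 1 with hqdef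
      have hpq : p ^ 3 + q ^ 3 = 0 := by linear_combination hPF - (P.rep 2) ^ 2 * hr0
      have hp : p ≠ 0 := by
        intro h
        have hq' : q = 0 := by
          have : q ^ 3 = 0 := by rw [h] at hpq; linear_combination hpq
          exact pow_eq_zero_iff (by norm_num) |>.mp this
        exact rep_zero_absurd h hq' hr0
      have hq : q ≠ 0 := by
        intro h
        have hp' : p = 0 := by
          have : p ^ 3 = 0 := by rw [h] at hpq; linear_combination hpq
          exact pow_eq_zero_iff (by norm_num) |>.mp this
        exact rep_zero_absurd hp' h hr0
      set l : ℂ := -q / p with hldef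
      have hl : l ^ 3 = 1 := by
        rw [hldef]
        field_simp
        linear_combination -hpq
      have hlp : l * p = -q := by rw [hldef]; field_simp
      have key : ∀ x : ℂ, ![l ^ 2, (1 : ℂ), x] ≠ 0 := fun x => vec_ne_zero' 1 (by simp)
      rw [Set.ncard_eq_three]
      refine ⟨Projectivization.mk ℂ ![l ^ 2, 1, μ] (key μ),
        Projectivization.mk ℂ ![l ^ 2, 1, ω * μ] (key _),
        Projectivization.mk ℂ ![l ^ 2, 1, ω ^ 2 * μ] (key _),
        mk_ne_gen' _ _ 1 2 rfl rfl (by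
          simp only [Matrix.cons_val_two, Matrix.tail_cons, Matrix.head_cons]
          have := hd1 1 ω (by intro h; exact hω1 (by linear_combination -h))
          simpa using this),
        mk_ne_gen' _ _ 1 2 rfl rfl (by
          simp only [Matrix.cons_val_two, Matrix.tail_cons, Matrix.head_cons]
          have := hd1 1 (ω ^ 2) (by intro h; exact hω21 (by linear_combination -h))
          simpa using this),
        mk_ne_gen' _ _ 1 2 rfl rfl (by
          simp only [Matrix.cons_val_two, Matrix.tail_cons, Matrix.head_cons]
          exact hd1 ω (ω ^ 2) (by intro h; exact hω2ω (by linear_combination -h))), ?_⟩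
      ext S
      simp only [Set.mem_setOf_eq, Set.mem_insert_iff, Set.mem_singleton_iff]
      constructor
      · rintro ⟨hSF, hSH, hST⟩
        set a := S.rep 0 with hadef
        set b := S.rep 1 with hbdef
        set c := S.rep 2 with hcdef
        have hab : a ^ 2 = l * b ^ 2 := by
          have h' : a ^ 2 * p + b ^ 2 * q = 0 := by linear_combination hST - c ^ 2 * hr0
          rw [hldef]
          field_simp
          linear_combination h'
        have hne : ¬(a = 0 ∧ b = 0 ∧ c = 0) := fun ⟨h1, h2, h3⟩ => rep_zero_absurd h1 h2 h3
        obtain ⟨hb, ha2, hc⟩ := solve_core' hω hμ hl hab hSF hSH hne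
        have hSmk : ∀ (x : ℂ), c = x * b →
            S = Projectivization.mk ℂ ![l ^ 2, 1, x] (key x) := by
          intro x hcx
          rw [← S.mk_rep]
          apply (mk_eq_mk_iff ℂ _ _ S.rep_nonzero (key x)).mpr
          refine ⟨Units.mk0 b hb, ?_⟩
          have hrepv : S.rep = ![a, b, c] := by funext i; fin_cases i <;> rfl
          rw [hrepv]
          funext i
          fin_cases i <;>
            simp only [Units.smul_def, Pi.smul_apply, smul_eq_mul, Units.val_mk0] <;>
            norm_num
          · linear_combination -ha2
          · linear_combination -hcx
        rcases hc with h | h | h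
        · exact Or.inl (hSmk μ h)
        · exact Or.inr (Or.inl (hSmk (ω * μ) h))
        · exact Or.inr (Or.inr (hSmk (ω ^ 2 * μ) h))
      · intro h
        have main : ∀ x : ℂ, x ^ 3 = -2 →
            ((Projectivization.mk ℂ ![l ^ 2, 1, x] (key x)).rep 0) ^ 3 +
              ((Projectivization.mk ℂ ![l ^ 2, 1, x] (key x)).rep 1) ^ 3 +
              ((Projectivization.mk ℂ ![l ^ 2, 1, x] (key x)).rep 2) ^ 3 = 0 ∧
            (((Projectivization.mk ℂ ![l ^ 2, 1, x] (key x)).rep 0) ^ 3 -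
                ((Projectivization.mk ℂ ![l ^ 2, 1, x] (key x)).rep 1) ^ 3) *
              (((Projectivization.mk ℂ ![l ^ 2, 1, x] (key x)).rep 1) ^ 3 -
                ((Projectivization.mk ℂ ![l ^ 2, 1, x] (key x)).rep 2) ^ 3) *
              (((Projectivization.mk ℂ ![l ^ 2, 1, x] (key x)).rep 0) ^ 3 -
                ((Projectivization.mk ℂ ![l ^ 2, 1, x] (key x)).rep 2) ^ 3) = 0 ∧
            ((Projectivization.mk ℂ ![l ^ 2, 1, x] (key x)).rep 0) ^ 2 * p +
              ((Projectivization.mk ℂ ![l ^ 2, 1, x] (key x)).rep 1) ^ 2 * q +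
              ((Projectivization.mk ℂ ![l ^ 2, 1, x] (key x)).rep 2) ^ 2 * P.rep 2 = 0 := by
          intro x hx3
          obtain ⟨u, hu⟩ := exists_smul_eq_mk_rep ℂ _ (key x)
          refine ⟨?_, ?_, ?_⟩ <;> rw [← hu] <;>
            simp only [Units.smul_def, Pi.smul_apply, smul_eq_mul,
              Matrix.cons_val_zero, Matrix.cons_val_one, Matrix.head_cons,
              Matrix.cons_val_two, Matrix.tail_cons]
          · linear_combination ((u : ℂ) ^ 3 * (l ^ 3 + 1)) * hl + (u : ℂ) ^ 3 * hx3
          · apply mul_eq_zero_of_left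
            apply mul_eq_zero_of_left
            linear_combination ((u : ℂ) ^ 3 * (l ^ 3 + 1)) * hl
          · linear_combination ((u : ℂ) ^ 2 * l * p) * hl + (u : ℂ) ^ 2 * hlp +
              ((u : ℂ) * x) ^ 2 * hr0
        rcases h with rfl | rfl | rfl
        · exact main μ hμ
        · exact main (ω * μ) (by linear_combination μ ^ 3 * hω3 + hμ)
        · exact main (ω ^ 2 * μ) (by linear_combination (ω ^ 3 + 1) * μ ^ 3 * hω3 + hμ)
end
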